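/- arXiv:1506.07389 — 2 statements merged into one kernel-verified Lean document; each statement's English description precedes it below -/
import Mathlib

section
/- Let G be a compact abelian group with dual group Γ, let n ≥ 2 be an integer, and let E ⊆ Γ. Then κ_n(E) = |1 − e^{iα_n(E)}|. -/
/-!
The chord length `t ↦ ‖1 - e^{it}‖` is a strictly increasing bijection from `[0, π]` onto
`[0, 2]`, and `‖e^{ia} - e^{ib}‖` is the chord of the circular distance of `a` and `b`.
Since the `n`-th roots of unity are exactly the `e^{iθ}` with `θ ∈ 𝐙ₙ` and `γ x = e^{i arg (γ x)}`,
an angle `t ∈ [0, π]` bounds the angular approximation problem as soon as `chord t` bounds the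
Kronecker one, and conversely every `ε > chord t` bounds the Kronecker problem when `t` bounds
the angular one. Taking infima, `κₙ(E) = chord αₙ(E)`.
-/
open Complex
open scoped Real

/-- Distance between two real numbers measured modulo `2π`, i.e. as distance
on the circle `ℝ/2πℤ`; it takes values in `[0, π]`. -/
noncomputable def angDist (a b : ℝ) : ℝ := |((a - b : ℝ) : Real.Angle).toReal|

/-- The `n`-th roots of unity in the circle. -/
def nthRoots (n : ℕ) : Set ℂ := {z : ℂ | z ^ n = 1}

/-- The set `𝐙ₙ = {2πj/n : j = 0, 1, ..., n-1}` of angles of `n`-th roots of unity. -/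
noncomputable def Zn (n : ℕ) : Set ℝ := {θ : ℝ | ∃ j : ℕ, j < n ∧ θ = 2 * π * j / n}

/-- `κₙ(E)`: the infimum of `ε ≥ 0` such that every function from `E` into the `n`-th
roots of unity can be approximated within `ε` by a character evaluation. -/
noncomputable def kroneckerConstantN {G : Type*} [CommGroup G] [TopologicalSpace G]
    (n : ℕ) (E : Set (ContinuousMonoidHom G Circle)) : ℝ :=
  sInf {ε : ℝ | 0 ≤ ε ∧ ∀ φ : ContinuousMonoidHom G Circle → ℂ,
    (∀ γ ∈ E, φ γ ∈ nthRoots n) →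
      ∃ x : G, ∀ γ ∈ E, ‖φ γ - (γ x : ℂ)‖ < ε}

/-- `αₙ(E)`: the infimum of `ε ≥ 0` such that every `𝐙ₙ`-valued function on `E` can be
approximated within `ε` (mod `2π`) by the argument of a character evaluation. -/
noncomputable def angularConstantN {G : Type*} [CommGroup G] [TopologicalSpace G]
    (n : ℕ) (E : Set (ContinuousMonoidHom G Circle)) : ℝ :=
  sInf {ε : ℝ | 0 ≤ ε ∧ ∀ φ : ContinuousMonoidHom G Circle → ℝ,
    (∀ γ ∈ E, φ γ ∈ Zn n) →
      ∃ x : G, ∀ γ ∈ E, angDist (φ γ) (Complex.arg (γ x : ℂ)) ≤ ε}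


noncomputable def chord (t : ℝ) : ℝ := ‖1 - exp (t * I)‖

lemma chord_eq_sqrt (t : ℝ) : chord t = √(2 - 2 * Real.cos t) := by
  rw [chord, norm_sub_rev, mul_comm, norm_exp_I_mul_ofReal_sub_one, Real.norm_eq_abs,
    ← Real.sqrt_sq_eq_abs]
  congr 1
  conv_rhs => rw [show t = 2 * (t / 2) by ring, Real.cos_two_mul]
  linear_combination 4 * Real.sin_sq_add_cos_sq (t / 2)

lemma chord_le_two (t : ℝ) : chord t ≤ 2 := by
  calc chord t ≤ ‖(1 : ℂ)‖ + ‖exp (t * I)‖ := norm_sub_le _ _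
    _ = 2 := by rw [norm_exp_ofReal_mul_I]; norm_num

lemma chord_zero : chord 0 = 0 := by simp [chord]

lemma chord_pi : chord π = 2 := by
  rw [chord, exp_pi_mul_I]; norm_num

lemma chord_strictMonoOn : StrictMonoOn chord (Set.Icc 0 π) := by
  intro s hs t ht hst
  rw [chord_eq_sqrt, chord_eq_sqrt]
  have := Real.strictAntiOn_cos hs ht hst
  exact Real.sqrt_lt_sqrt (by linarith [Real.cos_le_one s]) (by linarith)

lemma exists_chord_eq {y : ℝ} (hy : y ∈ Set.Icc 0 2) : ∃ t ∈ Set.Icc 0 π, chord t = y := by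
  apply intermediate_value_Icc Real.pi_nonneg (by unfold chord; fun_prop)
  rwa [chord_zero, chord_pi]

lemma norm_exp_mul_I_sub_exp_mul_I (a b : ℝ) :
    ‖exp (a * I) - exp (b * I)‖ = chord (a - b) := by
  have : exp (a * I) - exp (b * I) = exp (b * I) * (exp ((a - b : ℝ) * I) - 1) := by
    rw [mul_sub, mul_one, ← exp_add]; push_cast; ring_nf
  rw [this, norm_mul, norm_exp_ofReal_mul_I, one_mul, norm_sub_rev, chord]

lemma chord_angDist (a b : ℝ) : chord (angDist a b) = chord (a - b) := by
  rw [chord_eq_sqrt, chord_eq_sqrt, angDist, Real.cos_abs, Real.Angle.cos_toReal,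
    Real.Angle.cos_coe]

lemma angDist_mem_Icc (a b : ℝ) : angDist a b ∈ Set.Icc 0 π :=
  ⟨abs_nonneg _, Real.Angle.abs_toReal_le_pi _⟩

lemma norm_exp_mul_I_sub_coe_circle (θ : ℝ) (z : Circle) :
    ‖exp (θ * I) - z‖ = chord (angDist θ (arg z)) := by
  conv_lhs => rw [← Circle.exp_arg z, Circle.coe_exp]
  rw [norm_exp_mul_I_sub_exp_mul_I, chord_angDist]

lemma exp_mul_I_mem_nthRoots {n : ℕ} {θ : ℝ} (hθ : θ ∈ Zn n) : exp (θ * I) ∈ nthRoots n := by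
  obtain ⟨j, hj, rfl⟩ := hθ
  have hn : (n : ℂ) ≠ 0 := by exact_mod_cast (j.zero_le.trans_lt hj).ne'
  show _ ^ n = 1
  rw [← exp_nat_mul, exp_eq_one_iff]
  exact ⟨j, by push_cast; field_simp⟩

lemma exists_mem_Zn_exp_mul_I_eq {n : ℕ} (hn : n ≠ 0) {z : ℂ} (hz : z ∈ nthRoots n) :
    ∃ θ ∈ Zn n, exp (θ * I) = z := by
  have : NeZero n := ⟨hn⟩
  obtain ⟨j, hj, rfl⟩ := (isPrimitiveRoot_exp n hn).eq_pow_of_pow_eq_one hz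
  refine ⟨2 * π * j / n, ⟨j, hj, rfl⟩, ?_⟩
  rw [← exp_nat_mul]
  push_cast
  ring_nf

section Bounds

variable {G : Type*} [CommGroup G] [TopologicalSpace G] (n : ℕ)
  (E : Set (ContinuousMonoidHom G Circle))

def IsKroneckerBound (ε : ℝ) : Prop :=
  ∀ φ : ContinuousMonoidHom G Circle → ℂ, (∀ γ ∈ E, φ γ ∈ nthRoots n) →
    ∃ x : G, ∀ γ ∈ E, ‖φ γ - (γ x : ℂ)‖ < ε

def IsAngularBound (t : ℝ) : Prop :=
  ∀ ψ : ContinuousMonoidHom G Circle → ℝ, (∀ γ ∈ E, ψ γ ∈ Zn n) →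
    ∃ x : G, ∀ γ ∈ E, angDist (ψ γ) (arg (γ x : ℂ)) ≤ t

variable {n E}

lemma angularConstantN_def :
    angularConstantN n E = sInf {t | 0 ≤ t ∧ IsAngularBound n E t} := rfl

lemma kroneckerConstantN_def :
    kroneckerConstantN n E = sInf {ε | 0 ≤ ε ∧ IsKroneckerBound n E ε} := rfl

lemma isAngularBound_pi : IsAngularBound n E π :=
  fun _ _ => ⟨1, fun _ _ => Real.Angle.abs_toReal_le_pi _⟩

lemma angularConstantN_le {t : ℝ} (ht : 0 ≤ t) (h : IsAngularBound n E t) :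
    angularConstantN n E ≤ t :=
  csInf_le ⟨0, fun _ h => h.1⟩ ⟨ht, h⟩

lemma angularConstantN_mem_Icc : angularConstantN n E ∈ Set.Icc 0 π :=
  ⟨le_csInf ⟨π, ⟨Real.pi_nonneg, isAngularBound_pi⟩⟩ fun _ h => h.1,
    angularConstantN_le Real.pi_nonneg isAngularBound_pi⟩

lemma isAngularBound_of_angularConstantN_lt {t : ℝ} (h : angularConstantN n E < t) :
    IsAngularBound n E t := by
  rw [angularConstantN_def] at h
  obtain ⟨s, ⟨-, hs⟩, hst⟩ :=
    exists_lt_of_csInf_lt (by exact ⟨π, Real.pi_nonneg, isAngularBound_pi⟩) h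
  intro ψ hψ
  obtain ⟨x, hx⟩ := hs ψ hψ
  exact ⟨x, fun γ hγ => (hx γ hγ).trans hst.le⟩

lemma isAngularBound_of_isKroneckerBound_chord {t : ℝ} (ht : t ∈ Set.Icc 0 π)
    (h : IsKroneckerBound n E (chord t)) : IsAngularBound n E t := by
  intro ψ hψ
  obtain ⟨x, hx⟩ := h (fun γ => exp (ψ γ * I)) fun γ hγ => exp_mul_I_mem_nthRoots (hψ γ hγ)
  refine ⟨x, fun γ hγ => ?_⟩
  have := hx γ hγ
  rw [norm_exp_mul_I_sub_coe_circle] at this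
  exact ((chord_strictMonoOn.lt_iff_lt (angDist_mem_Icc _ _) ht).1 this).le

lemma isKroneckerBound_of_isAngularBound (hn : n ≠ 0) {t ε : ℝ} (ht : t ∈ Set.Icc 0 π)
    (h : IsAngularBound n E t) (hε : chord t < ε) : IsKroneckerBound n E ε := by
  intro φ hφ
  choose! ψ hψ hψφ using fun γ hγ => exists_mem_Zn_exp_mul_I_eq hn (hφ γ hγ)
  obtain ⟨x, hx⟩ := h ψ hψ
  refine ⟨x, fun γ hγ => ?_⟩
  rw [← hψφ γ hγ, norm_exp_mul_I_sub_coe_circle]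
  exact (chord_strictMonoOn.monotoneOn (angDist_mem_Icc _ _) ht (hx γ hγ)).trans_lt hε

lemma chord_angularConstantN_le {ε : ℝ} (hε0 : 0 ≤ ε) (hε : IsKroneckerBound n E ε) :
    chord (angularConstantN n E) ≤ ε := by
  rcases le_or_gt ε 2 with hε2 | hε2
  · obtain ⟨t, ht, rfl⟩ := exists_chord_eq ⟨hε0, hε2⟩
    exact chord_strictMonoOn.monotoneOn angularConstantN_mem_Icc ht
      (angularConstantN_le ht.1 (isAngularBound_of_isKroneckerBound_chord ht hε))
  · exact (chord_le_two _).trans hε2.le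

lemma isKroneckerBound_of_chord_angularConstantN_lt (hn : n ≠ 0) {η : ℝ}
    (hη : chord (angularConstantN n E) < η) : IsKroneckerBound n E η := by
  rcases le_or_gt η 2 with hη2 | hη2
  -- `αₙ(E)` need not be attained, so go through a chord value strictly between.
  · obtain ⟨ε, hαε, hεη⟩ := exists_between hη
    obtain ⟨t, ht, rfl⟩ := exists_chord_eq ⟨(norm_nonneg _).trans hαε.le, hεη.le.trans hη2⟩
    have hαt := (chord_strictMonoOn.lt_iff_lt angularConstantN_mem_Icc ht).1 hαε
    exact isKroneckerBound_of_isAngularBound hn ht (isAngularBound_of_angularConstantN_lt hαt) hεη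
  · exact isKroneckerBound_of_isAngularBound hn ⟨Real.pi_nonneg, le_rfl⟩ isAngularBound_pi
      (chord_pi.trans_lt hη2)

end Bounds

theorem stmt3_general {G : Type*} [CommGroup G] [TopologicalSpace G]
    (n : ℕ) (hn : 2 ≤ n) (E : Set (ContinuousMonoidHom G Circle)) :
    kroneckerConstantN n E
      = ‖1 - Complex.exp ((angularConstantN n E : ℂ) * Complex.I)‖ := by
  have hn0 : n ≠ 0 := by omega
  refine kroneckerConstantN_def.trans (csInf_eq_of_forall_ge_of_forall_gt_exists_lt ?_ ?_ ?_)
  · exact ⟨3, by norm_num, isKroneckerBound_of_chord_angularConstantN_lt hn0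
      ((chord_le_two _).trans_lt (by norm_num))⟩
  · exact fun ε hε => chord_angularConstantN_le hε.1 hε.2
  · intro w hw
    obtain ⟨η, hαη, hηw⟩ := exists_between hw
    exact ⟨η, ⟨(norm_nonneg _).trans hαη.le,
      isKroneckerBound_of_chord_angularConstantN_lt hn0 hαη⟩, hηw⟩

theorem stmt3 {G : Type*} [CommGroup G] [TopologicalSpace G] [IsTopologicalGroup G]
    [CompactSpace G] (n : ℕ) (hn : 2 ≤ n) (E : Set (ContinuousMonoidHom G Circle)) :
    kroneckerConstantN n E
      = ‖1 - Complex.exp ((angularConstantN n E : ℂ) * Complex.I)‖ :=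
  stmt3_general n hn E
end

section
/- Let Γ = ℤ₂ ⊕ ℤ₂ ⊕ ℤ₂ with standard basis vectors e₁, e₂, e₃, regarded as the dual group of the compact group G = ℤ₂ ⊕ ℤ₂ ⊕ ℤ₂ via the pairing γ(g) = (−1)^{γ₁g₁ + γ₂g₂ + γ₃g₃}, and let E = {e₂, e₃, e₁+e₂, e₁+e₃}. Then for every even integer n ≥ 2, κ_n(E) = 2. -/
open Complex
open scoped Real

/-- The pairing of `Γ = ℤ₂ ⊕ ℤ₂ ⊕ ℤ₂` with `G = ℤ₂ ⊕ ℤ₂ ⊕ ℤ₂`: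
`γ(g) = (−1)^(γ₁g₁ + γ₂g₂ + γ₃g₃)`. -/
def chi (γ g : ZMod 2 × ZMod 2 × ZMod 2) : ℂ :=
  (-1 : ℂ) ^ ((γ.1 * g.1 + γ.2.1 * g.2.1 + γ.2.2 * g.2.2).val)

/-- `κₙ(E)` for `E ⊆ ℤ₂ ⊕ ℤ₂ ⊕ ℤ₂` (viewed as the dual of `G = ℤ₂ ⊕ ℤ₂ ⊕ ℤ₂` via the
pairing `chi`): the infimum of `ε ≥ 0` such that every function from `E` into the
`n`-th roots of unity can be approximated within `ε` by a character evaluation. -/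
noncomputable def kappaNZ2 (n : ℕ) (E : Set (ZMod 2 × ZMod 2 × ZMod 2)) : ℝ :=
  sInf {ε : ℝ | 0 ≤ ε ∧ ∀ φ : (ZMod 2 × ZMod 2 × ZMod 2) → ℂ,
    (∀ γ ∈ E, (φ γ) ^ n = 1) →
      ∃ x : ZMod 2 × ZMod 2 × ZMod 2, ∀ γ ∈ E, ‖φ γ - chi γ x‖ < ε}

/-!
Every character value lies in `{1, -1}`, so the trivial approximation `x = 0` is always within
distance `2` of a function into the roots of unity, and `κₙ(E) ≤ 2`. Conversely `E` is not
dissociate: `e₂ + e₃ + (e₁ + e₂) + (e₁ + e₃) = 0`, so the product of `γ(x)` over these four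
characters is `1` for every `x`. For even `n` the sign pattern `(1, 1, 1, -1)` is admissible and has
product `-1`; it cannot agree with any `γ ↦ γ(x)`, and two distinct signs are at distance `2`.
-/

local notation "Γ" => ZMod 2 × ZMod 2 × ZMod 2

theorem neg_one_pow_val_add {R : Type*} [Ring R] (a b : ZMod 2) :
    (-1 : R) ^ (a + b).val = (-1) ^ a.val * (-1) ^ b.val := by
  rw [ZMod.val_add, ← neg_one_pow_eq_pow_mod_two, pow_add]

theorem chi_add_left (γ γ' x : Γ) : chi (γ + γ') x = chi γ x * chi γ' x := by
  simp only [chi, Prod.fst_add, Prod.snd_add, ← neg_one_pow_val_add]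
  ring_nf

theorem chi_sum_left (s : Finset Γ) (x : Γ) : chi (∑ γ ∈ s, γ) x = ∏ γ ∈ s, chi γ x := by
  induction s using Finset.induction_on with
  | empty => simp [chi]
  | insert a s ha ih => rw [Finset.sum_insert ha, Finset.prod_insert ha, chi_add_left, ih]

theorem chi_eq_one_or_neg_one (γ x : Γ) : chi γ x = 1 ∨ chi γ x = -1 :=
  neg_one_pow_eq_or ℂ _

theorem norm_chi (γ x : Γ) : ‖chi γ x‖ = 1 := by
  rcases chi_eq_one_or_neg_one γ x with h | h <;> simp [h]

theorem norm_sub_chi_le_two {n : ℕ} (hn : n ≠ 0) {z : ℂ} (hz : z ^ n = 1) (γ x : Γ) :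
    ‖z - chi γ x‖ ≤ 2 := by
  calc ‖z - chi γ x‖ ≤ ‖z‖ + ‖chi γ x‖ := norm_sub_le _ _
    _ = 2 := by rw [norm_eq_one_of_pow_eq_one hz hn, norm_chi]; norm_num

theorem eq_of_norm_sub_lt_two {a b : ℂ} (ha : a = 1 ∨ a = -1) (hb : b = 1 ∨ b = -1)
    (h : ‖a - b‖ < 2) : a = b := by
  rcases ha with rfl | rfl <;> rcases hb with rfl | rfl <;> first | rfl | norm_num at h

theorem exists_two_le_norm_sub_chi {s : Finset Γ} (hs : ∑ γ ∈ s, γ = 0) {φ : Γ → ℂ}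
    (hφ : ∀ γ ∈ s, φ γ = 1 ∨ φ γ = -1) (hprod : ∏ γ ∈ s, φ γ = -1) (x : Γ) :
    ∃ γ ∈ s, 2 ≤ ‖φ γ - chi γ x‖ := by
  by_contra! hlt
  have hagree : ∀ γ ∈ s, φ γ = chi γ x := fun γ hγ =>
    eq_of_norm_sub_lt_two (hφ γ hγ) (chi_eq_one_or_neg_one γ x) (hlt γ hγ)
  have hprod_chi : ∏ γ ∈ s, chi γ x = 1 := by
    rw [← chi_sum_left, hs]
    simp [chi]
  rw [Finset.prod_congr rfl hagree, hprod_chi] at hprod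
  norm_num at hprod

theorem kappaNZ2_eq_two {n : ℕ} (hn : n ≠ 0) (heven : Even n) {E : Set Γ} {s : Finset Γ}
    (hsE : ↑s ⊆ E) (hs : ∑ γ ∈ s, γ = 0) (hne : s.Nonempty) : kappaNZ2 n E = 2 := by
  obtain ⟨d, hd⟩ := hne
  rw [kappaNZ2, ← csInf_Ioi (a := (2 : ℝ))]
  congr 1
  ext ε
  constructor
  · rintro ⟨-, happrox⟩
    let φ : Γ → ℂ := fun γ => if γ = d then -1 else 1
    have hφ : ∀ γ, φ γ = 1 ∨ φ γ = -1 := fun γ => by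
      by_cases h : γ = d <;> simp [φ, h]
    have hprod : ∏ γ ∈ s, φ γ = -1 := by
      simp [φ, Finset.prod_ite_eq' s d, hd]
    obtain ⟨x, hx⟩ := happrox φ fun γ _ => by
      rcases hφ γ with h | h <;> simp [h, heven.neg_one_pow]
    obtain ⟨γ, hγ, h2⟩ := exists_two_le_norm_sub_chi hs (fun γ _ => hφ γ) hprod x
    exact h2.trans_lt (hx γ (hsE hγ))
  · intro h2
    exact ⟨by linarith [Set.mem_Ioi.mp h2], fun φ hφ =>
      ⟨0, fun γ hγ => (norm_sub_chi_le_two hn (hφ γ hγ) γ 0).trans_lt h2⟩⟩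

theorem stmt10 (n : ℕ) (hn : 2 ≤ n) (heven : Even n) :
    kappaNZ2 n {(0, 1, 0), (0, 0, 1), (1, 1, 0), (1, 0, 1)} = 2 :=
  kappaNZ2_eq_two (s := {(0, 1, 0), (0, 0, 1), (1, 1, 0), (1, 0, 1)}) (by omega) heven
    (by simp) (by decide) (Finset.insert_nonempty _ _)
end
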